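/- Let α ∈ (0,2), β ∈ ℝ with α + β < 2, A ≥ 1 and C₁ > 0. Then there exist v₀ ∈ (0,1] and C > 0, depending only on α, β, A, C₁, with the following property: for every Borel measure μ on ℝ concentrated on (0,A] satisfying μ([r,∞)) ≤ C₁ r^{−α} for all r > 0, and every v with 0 < |v| ≤ v₀, the function z ↦ F(v+z) + F(v−z) − 2F(v) is μ-integrable and H(v) = ∫₀^∞ (F(v+z)+F(v−z)−2F(v)) dμ(z) satisfies: |H(v)| ≤ C|v| if α + β < 1; |H(v)| ≤ C|v| · ln(1/|v|) if α + β = 1; and |H(v)| ≤ C|v|^{2−α−β} if 1 < α + β < 2. In particular, H(v) → 0 as v → 0, uniformly over all such measures μ. -/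

import Mathlib

open Filter Set MeasureTheory

/-- Response function `F(v) = (1/(2-β))|v|^(2-β) sgn v`. -/
noncomputable def Fresp (β v : ℝ) : ℝ := (1 / (2 - β)) * |v| ^ (2 - β) * Real.sign v


lemma Fresp_neg (β x : ℝ) : Fresp β (-x) = -Fresp β x := by
  simp [Fresp, Real.sign_neg]

lemma rpow_bound {p x c : ℝ} (hc : 0 < c) (h1 : c/2 ≤ x) (h2 : x ≤ 2*c) :
    x ^ p ≤ 2 ^ |p| * c ^ p := by
  have hx : 0 < x := lt_of_lt_of_le (by linarith) h1
  rcases le_or_gt 0 p with hp | hp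
  · have h3 : x ^ p ≤ (2*c) ^ p := Real.rpow_le_rpow hx.le h2 hp
    rw [Real.mul_rpow (by norm_num) hc.le] at h3
    refine h3.trans (mul_le_mul_of_nonneg_right ?_ (Real.rpow_nonneg hc.le p))
    exact Real.rpow_le_rpow_of_exponent_le one_le_two (le_abs_self p)
  · have h3 : x ^ p ≤ (c/2) ^ p := Real.rpow_le_rpow_of_nonpos (by linarith) h1 hp.le
    have h4 : (c/2 : ℝ) ^ p = 2 ^ (-p) * c ^ p := by
      rw [div_eq_mul_inv, Real.mul_rpow hc.le (by norm_num), Real.inv_rpow (by norm_num),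
        ← Real.rpow_neg (by norm_num), mul_comm]
    rw [h4] at h3
    refine h3.trans (mul_le_mul_of_nonneg_right ?_ (Real.rpow_nonneg hc.le p))
    exact Real.rpow_le_rpow_of_exponent_le one_le_two (neg_le_abs p)

lemma abs_Fresp_le {β : ℝ} (hβ : β < 2) (x : ℝ) : |Fresp β x| ≤ (1/(2-β)) * |x| ^ (2-β) := by
  have hβ2 : (0:ℝ) < 2 - β := by linarith
  have hs : |Real.sign x| ≤ 1 := by
    rcases Real.sign_apply_eq x with h | h | h <;> rw [h] <;> norm_num
  calc |(1/(2-β)) * |x| ^ (2-β) * Real.sign x|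
      = (1/(2-β)) * |x| ^ (2-β) * |Real.sign x| := by
        rw [abs_mul, abs_mul, abs_of_nonneg (by positivity : (0:ℝ) ≤ 1/(2-β)),
          abs_of_nonneg (Real.rpow_nonneg (abs_nonneg x) _)]
    _ ≤ (1/(2-β)) * |x| ^ (2-β) * 1 := by
        refine mul_le_mul_of_nonneg_left hs ?_
        have := Real.rpow_nonneg (abs_nonneg x) (2-β)
        positivity
    _ = (1/(2-β)) * |x| ^ (2-β) := mul_one _

lemma hasDerivAt_Fresp {β x : ℝ} (hβ : β < 2) (hx : 0 < x) :
    HasDerivAt (Fresp β) (x ^ (1 - β)) x := by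
  have hβ2 : (2:ℝ) - β ≠ 0 := by intro h; linarith [h]
  have h1 : HasDerivAt (fun y : ℝ => (1/(2-β)) * y ^ (2-β))
      ((1/(2-β)) * ((2-β) * x ^ (2-β-1))) x :=
    (Real.hasDerivAt_rpow_const (Or.inl hx.ne')).const_mul _
  have h2 : (1/(2-β)) * ((2-β) * x ^ (2-β-1)) = x ^ (1-β) := by
    rw [show (2-β-1 : ℝ) = 1-β by ring]; field_simp
  rw [h2] at h1
  refine h1.congr_of_eventuallyEq ?_
  filter_upwards [eventually_gt_nhds hx] with y hy
  simp [Fresp, abs_of_pos hy, Real.sign_of_pos hy]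

lemma bound_far {β : ℝ} (hβ : β < 2) {v z : ℝ} (hv : 0 < v) (hz : 2*v ≤ z) :
    |Fresp β (v+z) + Fresp β (v-z) - 2*Fresp β v| ≤
      (2*2^|1-β| + 2/(2-β)) * (v * z^(1-β) + v^(2-β)) := by
  have hzpos : 0 < z := lt_of_lt_of_le (by linarith) hz
  have hβ2 : (0:ℝ) < 2 - β := by linarith
  have hodd : Fresp β (v - z) = -Fresp β (z - v) := by
    rw [show v - z = -(z-v) by ring, Fresp_neg]
  have key : |Fresp β (z+v) - Fresp β (z-v)| ≤ (2^|1-β| * z^(1-β)) * (2*v) := by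
    have hs : Convex ℝ (Icc (z-v) (z+v)) := convex_Icc _ _
    have hder : ∀ x ∈ Icc (z-v) (z+v),
        HasDerivWithinAt (Fresp β) (x^(1-β)) (Icc (z-v) (z+v)) x := by
      intro x hx
      have hx0 : 0 < x := by have := hx.1; linarith
      exact (hasDerivAt_Fresp hβ hx0).hasDerivWithinAt
    have hbd : ∀ x ∈ Icc (z-v) (z+v), ‖x^(1-β)‖ ≤ 2^|1-β| * z^(1-β) := by
      intro x hx
      have hx0 : (0:ℝ) ≤ x := by have := hx.1; linarith
      rw [Real.norm_eq_abs, abs_of_nonneg (Real.rpow_nonneg hx0 _)]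
      exact rpow_bound hzpos (by have := hx.1; linarith) (by have := hx.2; linarith)
    have h := hs.norm_image_sub_le_of_norm_hasDerivWithin_le hder hbd
      (⟨by linarith, by linarith⟩ : z - v ∈ Icc (z-v) (z+v))
      (⟨by linarith, by linarith⟩ : z + v ∈ Icc (z-v) (z+v))
    rw [Real.norm_eq_abs, Real.norm_eq_abs] at h
    have : |z + v - (z - v)| = 2*v := by rw [show z + v - (z-v) = 2*v by ring]; exact abs_of_pos (by linarith)
    rw [this] at h
    exact h
  have hFv : |Fresp β v| ≤ (1/(2-β)) * v^(2-β) := by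
    have := abs_Fresp_le hβ v
    rwa [abs_of_pos hv] at this
  have expand : Fresp β (v+z) + Fresp β (v-z) - 2*Fresp β v
      = (Fresp β (z+v) - Fresp β (z-v)) - 2*Fresp β v := by
    rw [hodd, show v + z = z + v by ring]; ring
  rw [expand]
  have habs : |(Fresp β (z+v) - Fresp β (z-v)) - 2*Fresp β v|
      ≤ |Fresp β (z+v) - Fresp β (z-v)| + 2*|Fresp β v| := by
    calc |(Fresp β (z+v) - Fresp β (z-v)) - 2*Fresp β v|
        ≤ |Fresp β (z+v) - Fresp β (z-v)| + |2*Fresp β v| := abs_sub _ _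
      _ = |Fresp β (z+v) - Fresp β (z-v)| + 2*|Fresp β v| := by rw [abs_mul]; norm_num
  have h2pow : (0:ℝ) ≤ 2^|1-β| := Real.rpow_nonneg (by norm_num) _
  have hz1 : (0:ℝ) ≤ z^(1-β) := Real.rpow_nonneg hzpos.le _
  have hv2 : (0:ℝ) ≤ v^(2-β) := Real.rpow_nonneg hv.le _
  have c1 : (0:ℝ) ≤ 2^|1-β| * v^(2-β) := mul_nonneg h2pow hv2
  have c2 : (0:ℝ) ≤ (2-β)⁻¹ * (v * z^(1-β)) :=
    mul_nonneg (inv_nonneg.mpr hβ2.le) (mul_nonneg hv.le hz1)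
  have rhs : (2*2^|1-β| + 2/(2-β)) * (v * z^(1-β) + v^(2-β))
      = 2^|1-β| * z^(1-β) * (2*v) + 2*(1/(2-β) * v^(2-β))
        + (2*(2^|1-β| * v^(2-β)) + 2*((2-β)⁻¹ * (v * z^(1-β)))) := by ring
  linarith [key, hFv, habs, c1, c2]

lemma bound_near {β : ℝ} (hβ : β < 2) {v z : ℝ} (hv : 0 < v) (hz0 : 0 < z) (hz : z ≤ 2*v) :
    |Fresp β (v+z) + Fresp β (v-z) - 2*Fresp β v| ≤
      (max (2 * |1-β| * 2^|β|) (4*(3^(2-β)+3)/(2-β))) * (v^(-β) * z^2) := by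
  have hβ2 : (0:ℝ) < 2 - β := by linarith
  have hvm : (0:ℝ) ≤ v^(-β) := Real.rpow_nonneg hv.le _
  rcases le_or_gt z (v/2) with hcase | hcase
  · -- Taylor regime
    set L : ℝ := |1-β| * (2^|β| * v^(-β)) with hL
    have hLnn : 0 ≤ L := by
      have : (0:ℝ) ≤ 2^|β| := Real.rpow_nonneg (by norm_num) _
      positivity
    have inner : ∀ x ∈ Icc (v/2) (2*v), ∀ y ∈ Icc (v/2) (2*v),
        |x^(1-β) - y^(1-β)| ≤ L * |x - y| := by
      have hs : Convex ℝ (Icc (v/2) (2*v)) := convex_Icc _ _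
      have hder : ∀ x ∈ Icc (v/2) (2*v),
          HasDerivWithinAt (fun x : ℝ => x^(1-β)) ((1-β)*x^(-β)) (Icc (v/2) (2*v)) x := by
        intro x hx
        have hx0 : 0 < x := lt_of_lt_of_le (by linarith [hx.1]) hx.1
        have := (Real.hasDerivAt_rpow_const (p := 1-β) (Or.inl hx0.ne')).hasDerivWithinAt
          (s := Icc (v/2) (2*v))
        rwa [show (1-β-1:ℝ) = -β by ring] at this
      have hbd : ∀ x ∈ Icc (v/2) (2*v), ‖(1-β)*x^(-β)‖ ≤ L := by
        intro x hx
        have hx0 : 0 < x := lt_of_lt_of_le (by linarith [hx.1]) hx.1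
        rw [Real.norm_eq_abs, abs_mul, abs_of_nonneg (Real.rpow_nonneg hx0.le _)]
        have hb : x^(-β) ≤ 2^|β| * v^(-β) := by
          have := rpow_bound (p := -β) hv hx.1 hx.2
          rwa [abs_neg] at this
        rw [hL]
        exact mul_le_mul_of_nonneg_left hb (abs_nonneg _)
      intro x hx y hy
      have := hs.norm_image_sub_le_of_norm_hasDerivWithin_le hder hbd hy hx
      rwa [Real.norm_eq_abs, Real.norm_eq_abs] at this
    -- outer MVT
    have houter : ∀ t ∈ Icc (0:ℝ) z,
        HasDerivWithinAt (fun t => Fresp β (v+t) + Fresp β (v-t) - 2*Fresp β v)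
          ((v+t)^(1-β) - (v-t)^(1-β)) (Icc (0:ℝ) z) t := by
      intro t ht
      have ht0 : 0 ≤ t := ht.1
      have htz : t ≤ z := ht.2
      have hp1 : 0 < v + t := by linarith
      have hp2 : 0 < v - t := by linarith
      have h1 : HasDerivAt (fun t : ℝ => Fresp β (v+t)) ((v+t)^(1-β)) t := by
        have := (hasDerivAt_Fresp hβ hp1).comp t ((hasDerivAt_id t).const_add v)
        simpa [Function.comp_def] using this
      have h2 : HasDerivAt (fun t : ℝ => Fresp β (v-t)) (-((v-t)^(1-β))) t := by
        have := (hasDerivAt_Fresp hβ hp2).comp t ((hasDerivAt_id t).const_sub v)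
        simpa [Function.comp_def] using this
      have := (h1.add h2).sub_const (2*Fresp β v)
      have heq : (v+t)^(1-β) + -((v-t)^(1-β)) = (v+t)^(1-β) - (v-t)^(1-β) := by ring
      rw [heq] at this
      exact this.hasDerivWithinAt
    have hbd2 : ∀ t ∈ Icc (0:ℝ) z, ‖(v+t)^(1-β) - (v-t)^(1-β)‖ ≤ L * (2*z) := by
      intro t ht
      have ht0 : 0 ≤ t := ht.1
      have htz : t ≤ z := ht.2
      have hm1 : v + t ∈ Icc (v/2) (2*v) := ⟨by linarith, by linarith⟩
      have hm2 : v - t ∈ Icc (v/2) (2*v) := ⟨by linarith, by linarith⟩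
      have := inner _ hm1 _ hm2
      rw [Real.norm_eq_abs]
      refine this.trans ?_
      have : |v + t - (v - t)| = 2*t := by
        rw [show v + t - (v - t) = 2*t by ring]; exact abs_of_nonneg (by linarith)
      rw [this]
      have : L * (2*t) ≤ L * (2*z) := by
        apply mul_le_mul_of_nonneg_left (by linarith) hLnn
      linarith
    have hmvt := (convex_Icc (0:ℝ) z).norm_image_sub_le_of_norm_hasDerivWithin_le
      houter hbd2 (⟨le_refl 0, hz0.le⟩ : (0:ℝ) ∈ Icc (0:ℝ) z)
      (⟨hz0.le, le_refl z⟩ : z ∈ Icc (0:ℝ) z)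
    have hzero : Fresp β (v+0) + Fresp β (v-0) - 2*Fresp β v = 0 := by
      rw [add_zero, sub_zero]; ring
    rw [Real.norm_eq_abs, Real.norm_eq_abs, hzero, sub_zero, sub_zero, abs_of_nonneg hz0.le] at hmvt
    refine hmvt.trans ?_
    have hL2 : L * (2*z) * z = (2 * |1-β| * 2^|β|) * (v^(-β) * z^2) := by rw [hL]; ring
    rw [hL2]
    apply mul_le_mul_of_nonneg_right (le_max_left _ _) (by positivity)
  · -- crude regime
    have hb1 : |Fresp β (v+z)| ≤ (1/(2-β)) * (3^(2-β) * v^(2-β)) := by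
      refine (abs_Fresp_le hβ _).trans ?_
      apply mul_le_mul_of_nonneg_left _ (by positivity : (0:ℝ) ≤ 1/(2-β))
      rw [← Real.mul_rpow (by norm_num) hv.le]
      apply Real.rpow_le_rpow (abs_nonneg _) _ hβ2.le
      rw [abs_of_pos (by linarith : (0:ℝ) < v + z)]; linarith
    have hb2 : |Fresp β (v-z)| ≤ (1/(2-β)) * v^(2-β) := by
      refine (abs_Fresp_le hβ _).trans ?_
      apply mul_le_mul_of_nonneg_left _ (by positivity : (0:ℝ) ≤ 1/(2-β))
      apply Real.rpow_le_rpow (abs_nonneg _) _ hβ2.le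
      rw [abs_le]; constructor <;> linarith
    have hb3 : |Fresp β v| ≤ (1/(2-β)) * v^(2-β) := by
      have := abs_Fresp_le hβ v; rwa [abs_of_pos hv] at this
    have htot : |Fresp β (v+z) + Fresp β (v-z) - 2*Fresp β v|
        ≤ (1/(2-β)) * ((3^(2-β)+3) * v^(2-β)) := by
      have h := abs_sub (Fresp β (v+z) + Fresp β (v-z)) (2*Fresp β v)
      have h2 := abs_add_le (Fresp β (v+z)) (Fresp β (v-z))
      rw [abs_mul] at h
      have : |(2:ℝ)| = 2 := by norm_num
      rw [this] at h
      nlinarith [hb1, hb2, hb3]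
    refine htot.trans ?_
    have hv2 : v^(2-β) ≤ 4 * (v^(-β) * z^2) := by
      have hvv : v^(2-β) = v^(-β) * v^2 := by
        rw [show (2-β:ℝ) = -β + 2 by ring, Real.rpow_add hv, Real.rpow_two]
      rw [hvv]
      have : v^2 ≤ 4 * z^2 := by nlinarith
      nlinarith [hvm]
    have h3 : (0:ℝ) ≤ 3^(2-β) := Real.rpow_nonneg (by norm_num) _
    have step : (1/(2-β)) * ((3^(2-β)+3) * v^(2-β)) ≤ (1/(2-β)) * ((3^(2-β)+3) * (4 * (v^(-β) * z^2)))  := by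
      apply mul_le_mul_of_nonneg_left _ (by positivity : (0:ℝ) ≤ 1/(2-β))
      apply mul_le_mul_of_nonneg_left hv2 (by positivity)
    refine step.trans ?_
    have heq : (1/(2-β)) * ((3^(2-β)+3) * (4 * (v^(-β) * z^2)))
        = (4*(3^(2-β)+3)/(2-β)) * (v^(-β) * z^2) := by ring
    rw [heq]
    apply mul_le_mul_of_nonneg_right (le_max_right _ _) (by positivity)

open ENNReal in
lemma piece_le {μ : Measure ℝ} {I : Set ℝ} {f : ℝ → ℝ} {c m : ℝ} (hc : 0 ≤ c)
    (hb : ∀ z ∈ I, |f z| ≤ c) (hm : μ I ≤ ENNReal.ofReal m) :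
    ∫⁻ z in I, ‖f z‖₊ ∂μ ≤ ENNReal.ofReal (c * m) := by
  calc ∫⁻ z in I, (‖f z‖₊ : ℝ≥0∞) ∂μ ≤ ∫⁻ _ in I, ENNReal.ofReal c ∂μ := by
        refine setLIntegral_mono measurable_const (fun z hz => ?_)
        rw [← enorm_eq_nnnorm, ← ofReal_norm_eq_enorm]
        exact ENNReal.ofReal_le_ofReal (by simpa [Real.norm_eq_abs] using hb z hz)
    _ = ENNReal.ofReal c * μ I := setLIntegral_const I _
    _ ≤ ENNReal.ofReal c * ENNReal.ofReal m := mul_le_mul_right hm _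
    _ = ENNReal.ofReal (c * m) := (ENNReal.ofReal_mul hc).symm

lemma cover_low {c : ℝ} (hc : 0 < c) :
    Ioc (0:ℝ) c ⊆ ⋃ k : ℕ, Ioc (c * (1/2)^(k+1)) (c * (1/2)^k) := by
  intro z hz
  have hz0 : 0 < z := hz.1
  have hex : ∃ n : ℕ, c * (1/2)^(n+1) < z := by
    obtain ⟨n, hn⟩ := exists_pow_lt_of_lt_one (div_pos hz0 hc) (by norm_num : (1/2:ℝ) < 1)
    refine ⟨n, ?_⟩
    have h3 : c * (1/2)^n < z := by
      rw [mul_comm]; exact (lt_div_iff₀ hc).mp hn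
    have h2 : c * (1/2)^(n+1) ≤ c * (1/2)^n := by
      apply mul_le_mul_of_nonneg_left _ hc.le
      apply pow_le_pow_of_le_one (by norm_num) (by norm_num) (Nat.le_succ n)
    linarith
  refine mem_iUnion.mpr ⟨Nat.find hex, mem_Ioc.mpr ⟨Nat.find_spec hex, ?_⟩⟩
  rcases Nat.eq_zero_or_pos (Nat.find hex) with h0 | hpos
  · rw [h0]; simpa using hz.2
  · have hlt : Nat.find hex - 1 < Nat.find hex := Nat.sub_lt hpos one_pos
    have hmin := Nat.find_min hex hlt
    have hsucc : Nat.find hex - 1 + 1 = Nat.find hex := Nat.succ_pred_eq_of_pos hpos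
    rw [hsucc] at hmin
    exact le_of_not_gt hmin

lemma cover_up {c d z : ℝ} (hc : 0 < c) (hz : z ∈ Ioc c d) :
    ∃ k : ℕ, z ∈ Ioc (c * 2^k) (c * 2^(k+1)) := by
  have hex : ∃ n : ℕ, z ≤ c * 2^(n+1) := by
    obtain ⟨n, hn⟩ := pow_unbounded_of_one_lt (z/c) one_lt_two
    refine ⟨n, ?_⟩
    have h1 : z < c * 2^n := by
      rw [mul_comm]; exact (div_lt_iff₀ hc).mp hn
    have h2 : c * 2^n ≤ c * 2^(n+1) := by
      apply mul_le_mul_of_nonneg_left _ hc.le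
      apply pow_le_pow_right₀ one_le_two (Nat.le_succ n)
    linarith
  refine ⟨Nat.find hex, mem_Ioc.mpr ⟨?_, Nat.find_spec hex⟩⟩
  rcases Nat.eq_zero_or_pos (Nat.find hex) with h0 | hpos
  · rw [h0]; simpa using hz.1
  · have hlt : Nat.find hex - 1 < Nat.find hex := Nat.sub_lt hpos one_pos
    have hmin := Nat.find_min hex hlt
    have hsucc : Nat.find hex - 1 + 1 = Nat.find hex := Nat.succ_pred_eq_of_pos hpos
    rw [hsucc] at hmin
    exact lt_of_not_ge hmin

open ENNReal in
lemma tsum_ofReal_geom_le {a q : ℝ} (ha : 0 ≤ a) (h0 : 0 ≤ q) (h1 : q < 1) :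
    ∑' k : ℕ, ENNReal.ofReal (a * q^k) ≤ ENNReal.ofReal (a * (1-q)⁻¹) := by
  have heq : ∀ k:ℕ, ENNReal.ofReal (a * q^k) = ENNReal.ofReal a * (ENNReal.ofReal q)^k := by
    intro k
    rw [ENNReal.ofReal_mul ha, ENNReal.ofReal_pow h0]
  rw [tsum_congr heq, ENNReal.tsum_mul_left, ENNReal.tsum_geometric, ENNReal.ofReal_mul ha]
  apply mul_le_mul_right
  have h2 : (1:ℝ≥0∞) - ENNReal.ofReal q = ENNReal.ofReal (1-q) := by
    rw [ENNReal.ofReal_sub _ h0, ENNReal.ofReal_one]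
  rw [h2, ← ENNReal.ofReal_inv_of_pos (by linarith)]

lemma measurable_Fresp (β : ℝ) : Measurable (Fresp β) := by
  have hsign : Measurable Real.sign := by
    have h : Real.sign = fun r : ℝ => if r < 0 then (-1:ℝ) else if 0 < r then 1 else 0 := rfl
    rw [h]
    exact Measurable.ite (measurableSet_lt measurable_id measurable_const)
      measurable_const (Measurable.ite (measurableSet_lt measurable_const measurable_id)
        measurable_const measurable_const)
  exact ((measurable_const.mul ((measurable_id.abs).pow measurable_const))).mul hsign
section KeyBound

open ENNReal

lemma pow_rpow_comm {r : ℝ} (hr : 0 ≤ r) (k : ℕ) (p : ℝ) : ((r^k : ℝ))^p = (r^p)^k := by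
  rw [← Real.rpow_natCast r k, ← Real.rpow_mul hr, mul_comm, Real.rpow_mul hr, Real.rpow_natCast]

set_option maxHeartbeats 2000000 in
lemma key_bound (α β A C₁ : ℝ) (hα0 : 0 < α) (hα2 : α < 2) (hαβ : α + β < 2)
    (hA : 1 ≤ A) (hC₁ : 0 < C₁) :
    ∃ C : ℝ, 0 < C ∧ ∀ μ : Measure ℝ, μ (Set.Ioc (0:ℝ) A)ᶜ = 0 →
      (∀ r : ℝ, 0 < r → μ (Set.Ici r) ≤ ENNReal.ofReal (C₁ * r ^ (-α))) →
      ∀ v : ℝ, 0 < v → v ≤ 1/4 →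
        (α + β < 1 →
          ∫⁻ z, ‖Fresp β (v + z) + Fresp β (v - z) - 2 * Fresp β v‖₊ ∂μ
            ≤ ENNReal.ofReal (C * v)) ∧
        (α + β = 1 →
          ∫⁻ z, ‖Fresp β (v + z) + Fresp β (v - z) - 2 * Fresp β v‖₊ ∂μ
            ≤ ENNReal.ofReal (C * (v * Real.log (1/v)))) ∧
        (1 < α + β →
          ∫⁻ z, ‖Fresp β (v + z) + Fresp β (v - z) - 2 * Fresp β v‖₊ ∂μ
            ≤ ENNReal.ofReal (C * v ^ (2 - α - β))) := by
  have hβ2 : β < 2 := by linarith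
  have hβpos : (0:ℝ) < 2 - β := by linarith
  set cn : ℝ := max (2 * |1-β| * 2^|β|) (4*(3^(2-β)+3)/(2-β)) with hcn
  set cf : ℝ := 2*2^|1-β| + 2/(2-β) with hcf
  have h3nn : (0:ℝ) ≤ 3^(2-β) := Real.rpow_nonneg (by norm_num) _
  have hcn0 : 0 < cn := lt_of_lt_of_le (by positivity) (le_max_right _ _)
  have h2pownn : (0:ℝ) < 2^|1-β| := Real.rpow_pos_of_pos (by norm_num) _
  have hcf0 : 0 < cf := by positivity
  -- geometric ratios
  set q1 : ℝ := (1/2:ℝ)^((2:ℝ)-α) with hq1def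
  have hq1pos : 0 < q1 := Real.rpow_pos_of_pos (by norm_num) _
  have hq1lt : q1 < 1 := Real.rpow_lt_one (by norm_num) (by norm_num) (by linarith)
  set qα : ℝ := (2:ℝ)^(-α) with hqαdef
  have hqαpos : 0 < qα := Real.rpow_pos_of_pos (by norm_num) _
  have hqαlt : qα < 1 := Real.rpow_lt_one_of_one_lt_of_neg one_lt_two (by linarith)
  set qs : ℝ := (2:ℝ)^((1:ℝ)-α-β) with hqsdef
  have hqspos : 0 < qs := Real.rpow_pos_of_pos (by norm_num) _
  -- constants
  set KL : ℝ := cn * 4 * C₁ * (1-q1)⁻¹ with hKL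
  have hKL0 : 0 < KL := by
    have : 0 < (1-q1)⁻¹ := inv_pos.mpr (by linarith)
    positivity
  set KU2 : ℝ := cf * C₁ * 2^(-α) * (1-qα)⁻¹ with hKU2
  have hKU20 : 0 < KU2 := by
    have h1 : (0:ℝ) < (2:ℝ)^(-α) := Real.rpow_pos_of_pos (by norm_num) _
    have h2 : 0 < (1-qα)⁻¹ := inv_pos.mpr (by linarith)
    positivity
  set c7 : ℝ := cf * 2^|1-β| * C₁ with hc7
  have hc70 : 0 < c7 := by positivity
  set Kc1 : ℝ := c7 * (2*A)^((1:ℝ)-α-β) * (qs-1)⁻¹ with hKc1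
  set KN : ℝ := (Real.log A + 1)/Real.log 2 + 1 with hKN
  have hKN0 : 0 < KN := by
    have h1 : 0 < Real.log 2 := Real.log_pos one_lt_two
    have h2 : 0 ≤ Real.log A := Real.log_nonneg hA
    positivity
  set Kc2 : ℝ := c7 * KN with hKc2
  have hKc20 : 0 < Kc2 := by positivity
  set Kc3 : ℝ := c7 * 2^((1:ℝ)-α-β) * (1-qs)⁻¹ with hKc3
  set C : ℝ := KL + KU2 + (max 0 Kc1 + max 0 Kc2 + max 0 Kc3) + 1 with hC
  have hC0 : 0 < C := by
    have h1 : (0:ℝ) ≤ max 0 Kc1 := le_max_left _ _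
    have h2 : (0:ℝ) ≤ max 0 Kc2 := le_max_left _ _
    have h3 : (0:ℝ) ≤ max 0 Kc3 := le_max_left _ _
    positivity
  refine ⟨C, hC0, ?_⟩
  intro μ hconc htail v hv hv4
  set g : ℝ → ℝ := fun z => Fresp β (v + z) + Fresp β (v - z) - 2 * Fresp β v with hg
  have h2v0 : (0:ℝ) < 2*v := by linarith
  have h2vA : 2*v ≤ A := by linarith
  have hb2pos : (0:ℝ) < 2 - α - β := by linarith
  have hvb2 : (0:ℝ) ≤ v^((2:ℝ)-α-β) := Real.rpow_nonneg hv.le _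
  -- restrict to (0, A]
  have hres : μ.restrict (Set.Ioc (0:ℝ) A) = μ := by
    apply Measure.restrict_eq_self_of_ae_mem
    rw [MeasureTheory.ae_iff]
    simpa [Set.compl_def] using hconc
  have hsplit : ∫⁻ z, ‖g z‖₊ ∂μ
      = (∫⁻ z in Set.Ioc 0 (2*v), ‖g z‖₊ ∂μ) + ∫⁻ z in Set.Ioc (2*v) A, ‖g z‖₊ ∂μ := by
    conv_lhs => rw [← hres]
    rw [← lintegral_union measurableSet_Ioc (Set.Ioc_disjoint_Ioc_of_le le_rfl),
      Set.Ioc_union_Ioc_eq_Ioc h2v0.le h2vA]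
  -- Lower part
  have hterm : ∀ k:ℕ, cn * v^(-β) * (2*v*(1/2:ℝ)^k)^2 * (C₁ * (v*(1/2:ℝ)^k)^(-α))
      = (cn*4*C₁*v^((2:ℝ)-α-β)) * q1^k := by
    intro k
    have hak : (0:ℝ) < v*(1/2:ℝ)^k := by positivity
    have e2 : (2*v*(1/2:ℝ)^k)^2 = 4 * (v*(1/2:ℝ)^k)^(2:ℝ) := by
      rw [Real.rpow_two]; ring
    have e3 : (v*(1/2:ℝ)^k)^(2:ℝ) * (v*(1/2:ℝ)^k)^(-α) = (v*(1/2:ℝ)^k)^((2:ℝ)-α) := by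
      rw [← Real.rpow_add hak, sub_eq_add_neg]
    have e4 : (v*(1/2:ℝ)^k)^((2:ℝ)-α) = v^((2:ℝ)-α) * q1^k := by
      rw [Real.mul_rpow hv.le (by positivity), pow_rpow_comm (by norm_num : (0:ℝ) ≤ 1/2)]
    have e5 : v^(-β) * v^((2:ℝ)-α) = v^((2:ℝ)-α-β) := by
      rw [← Real.rpow_add hv]; congr 1; ring
    calc cn * v^(-β) * (2*v*(1/2:ℝ)^k)^2 * (C₁ * (v*(1/2:ℝ)^k)^(-α))
        = cn * 4 * C₁ * (v^(-β) * ((v*(1/2:ℝ)^k)^(2:ℝ) * (v*(1/2:ℝ)^k)^(-α))) := by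
          rw [e2]; ring
      _ = cn * 4 * C₁ * (v^(-β) * (v^((2:ℝ)-α) * q1^k)) := by rw [e3, e4]
      _ = (cn*4*C₁*v^((2:ℝ)-α-β)) * q1^k := by rw [← e5]; ring
  have hlow : ∫⁻ z in Set.Ioc 0 (2*v), ‖g z‖₊ ∂μ
      ≤ ENNReal.ofReal (KL * v^((2:ℝ)-α-β)) := by
    calc ∫⁻ z in Set.Ioc 0 (2*v), ‖g z‖₊ ∂μ
        ≤ ∫⁻ z in ⋃ k:ℕ, Set.Ioc (2*v*(1/2:ℝ)^(k+1)) (2*v*(1/2:ℝ)^k), ‖g z‖₊ ∂μ :=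
          lintegral_mono_set (cover_low h2v0)
      _ ≤ ∑' k:ℕ, ∫⁻ z in Set.Ioc (2*v*(1/2:ℝ)^(k+1)) (2*v*(1/2:ℝ)^k), ‖g z‖₊ ∂μ :=
          lintegral_iUnion_le _ _
      _ ≤ ∑' k:ℕ, ENNReal.ofReal ((cn*4*C₁*v^((2:ℝ)-α-β)) * q1^k) := by
          refine ENNReal.tsum_le_tsum (fun k => ?_)
          have hcb : (0:ℝ) ≤ cn * v^(-β) * (2*v*(1/2:ℝ)^k)^2 := by
            have := Real.rpow_nonneg hv.le (-β); positivity
          have hb : ∀ z ∈ Set.Ioc (2*v*(1/2:ℝ)^(k+1)) (2*v*(1/2:ℝ)^k),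
              |g z| ≤ cn * v^(-β) * (2*v*(1/2:ℝ)^k)^2 := by
            intro z hz
            have hz0 : 0 < z := lt_trans (by positivity) hz.1
            have hz2v : z ≤ 2*v := le_trans hz.2 (by
              have hh : (1/2:ℝ)^k ≤ 1 := pow_le_one₀ (by norm_num) (by norm_num)
              nlinarith only [hh, hv.le])
            refine (bound_near hβ2 hv hz0 hz2v).trans ?_
            have hsq : z^2 ≤ (2*v*(1/2:ℝ)^k)^2 := by
              apply pow_le_pow_left₀ hz0.le hz.2
            have hvm : (0:ℝ) ≤ v^(-β) := Real.rpow_nonneg hv.le _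
            calc cn * (v^(-β) * z^2) ≤ cn * (v^(-β) * (2*v*(1/2:ℝ)^k)^2) := by
                  apply mul_le_mul_of_nonneg_left _ hcn0.le
                  exact mul_le_mul_of_nonneg_left hsq hvm
              _ = cn * v^(-β) * (2*v*(1/2:ℝ)^k)^2 := by ring
          have hIci : Set.Ioc (2*v*(1/2:ℝ)^(k+1)) (2*v*(1/2:ℝ)^k) ⊆ Set.Ici (v*(1/2:ℝ)^k) := by
            intro z hz
            have he : 2*v*(1/2:ℝ)^(k+1) = v*(1/2:ℝ)^k := by
              rw [pow_succ]; ring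
            have h1 := hz.1
            simp only [Set.mem_Ici]
            linarith
          have hμ : μ (Set.Ioc (2*v*(1/2:ℝ)^(k+1)) (2*v*(1/2:ℝ)^k))
              ≤ ENNReal.ofReal (C₁ * (v*(1/2:ℝ)^k)^(-α)) :=
            le_trans (measure_mono hIci) (htail _ (by positivity))
          refine (piece_le hcb hb hμ).trans ?_
          exact le_of_eq (congrArg _ (hterm k))
      _ ≤ ENNReal.ofReal ((cn*4*C₁*v^((2:ℝ)-α-β)) * (1-q1)⁻¹) :=
          tsum_ofReal_geom_le (by positivity) hq1pos.le hq1lt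
      _ = ENNReal.ofReal (KL * v^((2:ℝ)-α-β)) := by rw [hKL]; ring_nf
  -- Upper part machinery
  set T : ℕ → ℝ≥0∞ := fun k =>
    ∫⁻ z in Set.Ioc ((2*v)*2^k) ((2*v)*2^(k+1)) ∩ Set.Ioc 0 A, ‖g z‖₊ ∂μ with hT
  have hup : ∫⁻ z in Set.Ioc (2*v) A, ‖g z‖₊ ∂μ ≤ ∑' k, T k := by
    refine le_trans (lintegral_mono_set ?_) (lintegral_iUnion_le _ _)
    intro z hz
    obtain ⟨k, hk⟩ := cover_up h2v0 hz
    exact Set.mem_iUnion.mpr ⟨k, hk, ⟨lt_trans h2v0 hz.1, hz.2⟩⟩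
  have hx1nn : ∀ k:ℕ, (0:ℝ) ≤ (c7 * v * (2*v)^((1:ℝ)-α-β)) * qs^k := by
    intro k
    have h1 : (0:ℝ) ≤ (2*v)^((1:ℝ)-α-β) := Real.rpow_nonneg h2v0.le _
    positivity
  have hx2nn : ∀ k:ℕ, (0:ℝ) ≤ (cf*C₁*2^(-α)*v^((2:ℝ)-α-β)) * qα^k := by
    intro k
    have h1 : (0:ℝ) ≤ (2:ℝ)^(-α) := Real.rpow_nonneg (by norm_num) _
    positivity
  have hT_le : ∀ k:ℕ, T k ≤ ENNReal.ofReal ((c7 * v * (2*v)^((1:ℝ)-α-β)) * qs^k)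
      + ENNReal.ofReal ((cf*C₁*2^(-α)*v^((2:ℝ)-α-β)) * qα^k) := by
    intro k
    have hbk : (0:ℝ) < (2*v)*2^k := by positivity
    have hsub : Set.Ioc ((2*v)*2^k) ((2*v)*2^(k+1)) ∩ Set.Ioc 0 A ⊆ Set.Ici ((2*v)*2^k) :=
      fun z hz => le_of_lt hz.1.1
    have hμ : μ (Set.Ioc ((2*v)*2^k) ((2*v)*2^(k+1)) ∩ Set.Ioc 0 A)
        ≤ ENNReal.ofReal (C₁ * ((2*v)*2^k)^(-α)) :=
      le_trans (measure_mono hsub) (htail _ hbk)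
    have hr1 : (0:ℝ) ≤ ((2*v)*2^k)^((1:ℝ)-β) := Real.rpow_nonneg hbk.le _
    have hr2 : (0:ℝ) ≤ v^((2:ℝ)-β) := Real.rpow_nonneg hv.le _
    have hcnn : (0:ℝ) ≤ cf * (v * (2^|1-β| * ((2*v)*2^k)^((1:ℝ)-β)) + v^((2:ℝ)-β)) := by
      positivity
    have hbd : ∀ z ∈ Set.Ioc ((2*v)*2^k) ((2*v)*2^(k+1)) ∩ Set.Ioc 0 A,
        |g z| ≤ cf * (v * (2^|1-β| * ((2*v)*2^k)^((1:ℝ)-β)) + v^((2:ℝ)-β)) := by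
      intro z hz
      have hpk : (1:ℝ) ≤ 2^k := one_le_pow₀ one_le_two
      have h1 : 2*v ≤ z := by nlinarith only [hz.1.1, hpk, hv.le]
      refine (bound_far hβ2 hv h1).trans ?_
      have hzb : z^((1:ℝ)-β) ≤ 2^|1-β| * ((2*v)*2^k)^((1:ℝ)-β) := by
        refine rpow_bound hbk (by linarith [hz.1.1] : ((2*v)*2^k)/2 ≤ z) ?_
        have he : (2*v)*2^(k+1) = 2*((2*v)*2^k) := by rw [pow_succ]; ring
        linarith [hz.1.2]
      rw [hcf]
      apply mul_le_mul_of_nonneg_left _ (by rw [← hcf]; exact hcf0.le)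
      have := mul_le_mul_of_nonneg_left hzb hv.le
      linarith
    refine le_trans (piece_le hcnn hbd hμ) ?_
    have hbk2 : ((2*v)*2^k : ℝ)^((1:ℝ)-β) * ((2*v)*2^k)^(-α) = ((2*v)*2^k)^((1:ℝ)-α-β) := by
      rw [← Real.rpow_add hbk]; congr 1; ring
    have hbk3 : ((2*v)*2^k : ℝ)^((1:ℝ)-α-β) = (2*v)^((1:ℝ)-α-β) * qs^k := by
      rw [Real.mul_rpow h2v0.le (by positivity), pow_rpow_comm (by norm_num : (0:ℝ) ≤ 2)]
    have hbk4 : ((2*v)*2^k : ℝ)^(-α) = (2*v)^(-α) * qα^k := by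
      rw [Real.mul_rpow h2v0.le (by positivity), pow_rpow_comm (by norm_num : (0:ℝ) ≤ 2)]
    have h2vr : ((2:ℝ)*v)^(-α) = 2^(-α) * v^(-α) := Real.mul_rpow (by norm_num) hv.le
    have hvv : v^((2:ℝ)-β) * v^(-α) = v^((2:ℝ)-α-β) := by
      rw [← Real.rpow_add hv]; congr 1; ring
    have hsplit2 : cf * (v * (2^|1-β| * ((2*v)*2^k)^((1:ℝ)-β)) + v^((2:ℝ)-β))
          * (C₁ * ((2*v)*2^k)^(-α))
        = (c7 * v * (2*v)^((1:ℝ)-α-β)) * qs^k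
          + (cf*C₁*2^(-α)*v^((2:ℝ)-α-β)) * qα^k := by
      have hm1 : cf * (v * (2^|1-β| * ((2*v)*2^k)^((1:ℝ)-β))) * (C₁ * ((2*v)*2^k)^(-α))
          = (c7 * v * (2*v)^((1:ℝ)-α-β)) * qs^k := by
        calc cf * (v * (2^|1-β| * ((2*v)*2^k)^((1:ℝ)-β))) * (C₁ * ((2*v)*2^k)^(-α))
            = cf * 2^|1-β| * C₁ * v * (((2*v)*2^k)^((1:ℝ)-β) * ((2*v)*2^k)^(-α)) := by ring
          _ = cf * 2^|1-β| * C₁ * v * ((2*v)^((1:ℝ)-α-β) * qs^k) := by rw [hbk2, hbk3]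
          _ = (c7 * v * (2*v)^((1:ℝ)-α-β)) * qs^k := by rw [hc7]; ring
      have hm2 : cf * v^((2:ℝ)-β) * (C₁ * ((2*v)*2^k)^(-α))
          = (cf*C₁*2^(-α)*v^((2:ℝ)-α-β)) * qα^k := by
        calc cf * v^((2:ℝ)-β) * (C₁ * ((2*v)*2^k)^(-α))
            = cf * C₁ * (v^((2:ℝ)-β) * ((2*v)*2^k)^(-α)) := by ring
          _ = cf * C₁ * (v^((2:ℝ)-β) * ((2^(-α) * v^(-α)) * qα^k)) := by rw [hbk4, h2vr]
          _ = cf * C₁ * 2^(-α) * (v^((2:ℝ)-β) * v^(-α)) * qα^k := by ring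
          _ = (cf*C₁*2^(-α)*v^((2:ℝ)-α-β)) * qα^k := by rw [hvv]
      calc cf * (v * (2^|1-β| * ((2*v)*2^k)^((1:ℝ)-β)) + v^((2:ℝ)-β)) * (C₁ * ((2*v)*2^k)^(-α))
          = cf * (v * (2^|1-β| * ((2*v)*2^k)^((1:ℝ)-β))) * (C₁ * ((2*v)*2^k)^(-α))
            + cf * v^((2:ℝ)-β) * (C₁ * ((2*v)*2^k)^(-α)) := by ring
        _ = _ := by rw [hm1, hm2]
    rw [hsplit2, ENNReal.ofReal_add (hx1nn k) (hx2nn k)]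
  have hTzero : ∀ k:ℕ, A ≤ (2*v)*2^k → T k = 0 := by
    intro k hk
    have hempty : Set.Ioc ((2*v)*2^k) ((2*v)*2^(k+1)) ∩ Set.Ioc 0 A = ∅ := by
      apply Set.eq_empty_iff_forall_notMem.mpr
      rintro z ⟨⟨hz1, -⟩, -, hz4⟩
      linarith
    simp only [hT, hempty, Measure.restrict_empty, lintegral_zero_measure]
  have hU2 : ∑' k:ℕ, ENNReal.ofReal ((cf*C₁*2^(-α)*v^((2:ℝ)-α-β)) * qα^k)
      ≤ ENNReal.ofReal (KU2 * v^((2:ℝ)-α-β)) := by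
    refine (tsum_ofReal_geom_le (by
        have h1 : (0:ℝ) ≤ (2:ℝ)^(-α) := Real.rpow_nonneg (by norm_num) _
        positivity) hqαpos.le hqαlt).trans ?_
    apply ENNReal.ofReal_le_ofReal
    apply le_of_eq
    rw [hKU2]; ring
  refine ⟨fun hcase => ?_, fun hcase => ?_, fun hcase => ?_⟩
  · -- case α + β < 1
    have hs' : (0:ℝ) < 1-α-β := by linarith
    have hqsgt : 1 < qs := by
      rw [hqsdef]
      exact (Real.one_lt_rpow_iff_of_pos (by norm_num)).mpr (Or.inl ⟨one_lt_two, hs'⟩)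
    obtain ⟨n0, hn0⟩ := pow_unbounded_of_one_lt (A/(2*v)) one_lt_two
    have hexN : ∃ n:ℕ, A ≤ (2*v)*2^n := by
      refine ⟨n0, ?_⟩
      have h := (div_lt_iff₀ h2v0).mp hn0
      rw [mul_comm] at h
      exact h.le
    have hNspec := Nat.find_spec hexN
    have hNpos : 0 < Nat.find hexN := by
      rcases Nat.eq_zero_or_pos (Nat.find hexN) with h0 | h
      · exfalso
        rw [h0, pow_zero, mul_one] at hNspec
        linarith
      · exact h
    have hmin' := Nat.find_min hexN (Nat.sub_lt hNpos one_pos)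
    push_neg at hmin'
    have hsucc : Nat.find hexN - 1 + 1 = Nat.find hexN := Nat.succ_pred_eq_of_pos hNpos
    have h2N : (2*v)*2^(Nat.find hexN) ≤ 2*A := by
      have he : (2*v)*2^(Nat.find hexN) = 2*((2*v)*2^(Nat.find hexN - 1)) := by
        conv_lhs => rw [← hsucc]
        rw [pow_succ]; ring
      linarith
    have htsum : ∑' k, T k = ∑ k ∈ Finset.range (Nat.find hexN), T k := by
      refine tsum_eq_sum (fun k hk => hTzero k ?_)
      have hkN : Nat.find hexN ≤ k := le_of_not_gt (fun h => hk (Finset.mem_range.mpr h))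
      have hp : (2:ℝ)^(Nat.find hexN) ≤ 2^k := pow_le_pow_right₀ one_le_two hkN
      nlinarith only [hNspec, hp, hv.le]
    have hsumT : ∑' k, T k ≤ (∑ k ∈ Finset.range (Nat.find hexN),
          ENNReal.ofReal ((c7 * v * (2*v)^((1:ℝ)-α-β)) * qs^k))
        + ENNReal.ofReal (KU2 * v^((2:ℝ)-α-β)) := by
      rw [htsum]
      refine le_trans (Finset.sum_le_sum (fun k _ => hT_le k)) ?_
      rw [Finset.sum_add_distrib]
      exact add_le_add le_rfl (le_trans (ENNReal.sum_le_tsum _) hU2)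
    have hKc1nn : (0:ℝ) ≤ Kc1 := by
      rw [hKc1]
      have h1 : (0:ℝ) ≤ (2*A)^((1:ℝ)-α-β) := Real.rpow_nonneg (by linarith) _
      have h2 : (0:ℝ) ≤ (qs-1)⁻¹ := inv_nonneg.mpr (by linarith)
      positivity
    have hgeom : ∑ k ∈ Finset.range (Nat.find hexN),
        ENNReal.ofReal ((c7 * v * (2*v)^((1:ℝ)-α-β)) * qs^k) ≤ ENNReal.ofReal (Kc1 * v) := by
      rw [← ENNReal.ofReal_sum_of_nonneg (fun k _ => hx1nn k)]
      apply ENNReal.ofReal_le_ofReal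
      rw [← Finset.mul_sum, geom_sum_eq (ne_of_gt hqsgt)]
      have hD : (0:ℝ) < qs - 1 := by linarith
      have h2vnn : (0:ℝ) ≤ (2*v)^((1:ℝ)-α-β) := Real.rpow_nonneg h2v0.le _
      have key2 : (2*v)^((1:ℝ)-α-β) * qs^(Nat.find hexN)
          = ((2*v)*2^(Nat.find hexN))^((1:ℝ)-α-β) := by
        rw [Real.mul_rpow h2v0.le (by positivity), pow_rpow_comm (by norm_num : (0:ℝ) ≤ 2)]
      have key3 : ((2*v)*2^(Nat.find hexN) : ℝ)^((1:ℝ)-α-β) ≤ (2*A)^((1:ℝ)-α-β) :=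
        Real.rpow_le_rpow (by positivity) h2N (by linarith)
      calc c7 * v * (2*v)^((1:ℝ)-α-β) * ((qs^(Nat.find hexN) - 1)/(qs - 1))
          ≤ c7 * v * (2*v)^((1:ℝ)-α-β) * (qs^(Nat.find hexN)/(qs - 1)) := by
            refine mul_le_mul_of_nonneg_left ?_ (by positivity)
            exact (div_le_div_iff_of_pos_right hD).mpr (by linarith)
        _ = c7 * v * (((2*v)^((1:ℝ)-α-β) * qs^(Nat.find hexN)) * (qs-1)⁻¹) := by ring
        _ = c7 * v * (((2*v)*2^(Nat.find hexN))^((1:ℝ)-α-β) * (qs-1)⁻¹) := by rw [key2]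
        _ ≤ c7 * v * ((2*A)^((1:ℝ)-α-β) * (qs-1)⁻¹) := by
            refine mul_le_mul_of_nonneg_left ?_ (by positivity)
            exact mul_le_mul_of_nonneg_right key3 (inv_nonneg.mpr hD.le)
        _ = Kc1 * v := by rw [hKc1]; ring
    rw [hsplit]
    refine le_trans (add_le_add hlow (hup.trans (hsumT.trans (add_le_add hgeom le_rfl)))) ?_
    rw [← ENNReal.ofReal_add (mul_nonneg hKc1nn hv.le) (mul_nonneg hKU20.le hvb2),
        ← ENNReal.ofReal_add (mul_nonneg hKL0.le hvb2)
          (add_nonneg (mul_nonneg hKc1nn hv.le) (mul_nonneg hKU20.le hvb2))]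
    apply ENNReal.ofReal_le_ofReal
    have hvb2v : v^((2:ℝ)-α-β) ≤ v := by
      have h := Real.rpow_le_rpow_of_exponent_ge hv (by linarith : v ≤ 1)
        (by linarith : (1:ℝ) ≤ 2-α-β)
      rwa [Real.rpow_one] at h
    have hKc1le : Kc1 ≤ max 0 Kc1 := le_max_right _ _
    rw [hC]
    linarith only [mul_le_mul_of_nonneg_left hvb2v hKL0.le,
      mul_le_mul_of_nonneg_left hvb2v hKU20.le,
      mul_le_mul_of_nonneg_right hKc1le hv.le, mul_nonneg (le_max_left (0:ℝ) Kc2) hv.le,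
      mul_nonneg (le_max_left (0:ℝ) Kc3) hv.le, hv]
  · -- case α + β = 1
    have hs0 : (1:ℝ)-α-β = 0 := by linarith
    have hqs1 : qs = 1 := by rw [hqsdef, hs0, Real.rpow_zero]
    have h2v1 : (2*v)^((1:ℝ)-α-β) = 1 := by rw [hs0, Real.rpow_zero]
    obtain ⟨n0, hn0⟩ := pow_unbounded_of_one_lt (A/(2*v)) one_lt_two
    have hexN : ∃ n:ℕ, A ≤ (2*v)*2^n := by
      refine ⟨n0, ?_⟩
      have h := (div_lt_iff₀ h2v0).mp hn0
      rw [mul_comm] at h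
      exact h.le
    have hNspec := Nat.find_spec hexN
    have hNpos : 0 < Nat.find hexN := by
      rcases Nat.eq_zero_or_pos (Nat.find hexN) with h0 | h
      · exfalso
        rw [h0, pow_zero, mul_one] at hNspec
        linarith
      · exact h
    have hmin' := Nat.find_min hexN (Nat.sub_lt hNpos one_pos)
    push_neg at hmin'
    have hsucc : Nat.find hexN - 1 + 1 = Nat.find hexN := Nat.succ_pred_eq_of_pos hNpos
    have h2N : (2*v)*2^(Nat.find hexN) ≤ 2*A := by
      have he : (2*v)*2^(Nat.find hexN) = 2*((2*v)*2^(Nat.find hexN - 1)) := by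
        conv_lhs => rw [← hsucc]
        rw [pow_succ]; ring
      linarith
    have htsum : ∑' k, T k = ∑ k ∈ Finset.range (Nat.find hexN), T k := by
      refine tsum_eq_sum (fun k hk => hTzero k ?_)
      have hkN : Nat.find hexN ≤ k := le_of_not_gt (fun h => hk (Finset.mem_range.mpr h))
      have hp : (2:ℝ)^(Nat.find hexN) ≤ 2^k := pow_le_pow_right₀ one_le_two hkN
      nlinarith only [hNspec, hp, hv.le]
    have hsumT : ∑' k, T k ≤ (∑ k ∈ Finset.range (Nat.find hexN),
          ENNReal.ofReal ((c7 * v * (2*v)^((1:ℝ)-α-β)) * qs^k))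
        + ENNReal.ofReal (KU2 * v^((2:ℝ)-α-β)) := by
      rw [htsum]
      refine le_trans (Finset.sum_le_sum (fun k _ => hT_le k)) ?_
      rw [Finset.sum_add_distrib]
      exact add_le_add le_rfl (le_trans (ENNReal.sum_le_tsum _) hU2)
    have hlog2 : 0 < Real.log 2 := Real.log_pos one_lt_two
    have hlogA : 0 ≤ Real.log A := Real.log_nonneg hA
    have hL1 : 1 ≤ Real.log (1/v) := by
      have h4 : (4:ℝ) ≤ 1/v := by rw [le_div_iff₀ hv]; linarith
      have he4 : Real.exp 1 ≤ 4 := by linarith [Real.exp_one_lt_d9]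
      have hmono : Real.log 4 ≤ Real.log (1/v) := Real.log_le_log (by norm_num) h4
      have h14 : (1:ℝ) ≤ Real.log 4 := by
        rw [Real.le_log_iff_exp_le (by norm_num : (0:ℝ) < 4)]; exact he4
      linarith
    have hNle : ((Nat.find hexN : ℕ) : ℝ) ≤ KN * Real.log (1/v) := by
      have hpow : (2:ℝ)^(Nat.find hexN - 1) < A/(2*v) := by
        rw [lt_div_iff₀ h2v0, mul_comm]
        exact hmin'
      have hlogpow := Real.log_lt_log (by positivity) hpow
      rw [Real.log_pow] at hlogpow
      have hlogdiv : Real.log (A/(2*v)) = Real.log A - Real.log (2*v) :=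
        Real.log_div (by linarith) h2v0.ne'
      have hlog2v : Real.log (2*v) = Real.log 2 + Real.log v := Real.log_mul (by norm_num) hv.ne'
      have hcast : ((Nat.find hexN - 1 : ℕ) : ℝ) = ((Nat.find hexN : ℕ) : ℝ) - 1 := by
        rw [Nat.cast_sub hNpos]; norm_num
      rw [hcast, hlogdiv, hlog2v] at hlogpow
      have hlogv : Real.log (1/v) = -Real.log v := by rw [one_div, Real.log_inv]
      set N' : ℝ := ((Nat.find hexN : ℕ) : ℝ) with hN'
      set L : ℝ := Real.log (1/v) with hLdef
      have h1 : N' * Real.log 2 ≤ Real.log A + L + Real.log 2 := by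
        linarith only [hlogpow, hlogv, hlog2]
      have h2 : Real.log A + L + Real.log 2 ≤ (Real.log A + 1)*L + Real.log 2 * L := by
        nlinarith only [mul_nonneg (by linarith only [hL1] : (0:ℝ) ≤ L - 1) hlogA,
          mul_nonneg (by linarith only [hL1] : (0:ℝ) ≤ L - 1) hlog2.le]
      have h4eq : ((Real.log A + 1)/Real.log 2 + 1)*L
          = (((Real.log A + 1) + Real.log 2)*L)/Real.log 2 := by
        field_simp
      rw [hKN, h4eq, le_div_iff₀ hlog2]
      linarith only [h1, h2]
    have hgeom : ∑ k ∈ Finset.range (Nat.find hexN),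
        ENNReal.ofReal ((c7 * v * (2*v)^((1:ℝ)-α-β)) * qs^k)
        ≤ ENNReal.ofReal (Kc2 * (v * Real.log (1/v))) := by
      have hcongr : ∀ k ∈ Finset.range (Nat.find hexN),
          ENNReal.ofReal ((c7 * v * (2*v)^((1:ℝ)-α-β)) * qs^k) = ENNReal.ofReal (c7*v) :=
        fun k _ => by rw [h2v1, hqs1, one_pow, mul_one, mul_one]
      rw [Finset.sum_congr rfl hcongr, Finset.sum_const, Finset.card_range, nsmul_eq_mul,
        ← ENNReal.ofReal_natCast, ← ENNReal.ofReal_mul (Nat.cast_nonneg _)]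
      apply ENNReal.ofReal_le_ofReal
      rw [hKc2]
      linarith only [mul_le_mul_of_nonneg_right hNle (mul_nonneg hc70.le hv.le)]
    rw [hsplit]
    refine le_trans (add_le_add hlow (hup.trans (hsumT.trans (add_le_add hgeom le_rfl)))) ?_
    have hKc2vL : (0:ℝ) ≤ Kc2 * (v * Real.log (1/v)) := by
      refine mul_nonneg hKc20.le (mul_nonneg hv.le (by linarith))
    rw [← ENNReal.ofReal_add hKc2vL (mul_nonneg hKU20.le hvb2),
        ← ENNReal.ofReal_add (mul_nonneg hKL0.le hvb2)
          (add_nonneg hKc2vL (mul_nonneg hKU20.le hvb2))]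
    apply ENNReal.ofReal_le_ofReal
    have hvb2eq : v^((2:ℝ)-α-β) = v := by
      rw [show (2:ℝ)-α-β = 1 by linarith, Real.rpow_one]
    rw [hvb2eq, hC]
    have hvL : v ≤ v * Real.log (1/v) := le_mul_of_one_le_right hv.le hL1
    have hKc2le : Kc2 ≤ max 0 Kc2 := le_max_right _ _
    have hLnn : (0:ℝ) ≤ v * Real.log (1/v) := mul_nonneg hv.le (by linarith)
    linarith only [mul_le_mul_of_nonneg_left hvL hKL0.le,
      mul_le_mul_of_nonneg_left hvL hKU20.le,
      mul_le_mul_of_nonneg_right hKc2le hLnn,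
      mul_nonneg (le_max_left (0:ℝ) Kc1) hLnn, mul_nonneg (le_max_left (0:ℝ) Kc3) hLnn,
      hLnn, hvL]
  · -- case 1 < α + β
    have hqslt : qs < 1 := by
      rw [hqsdef]
      exact Real.rpow_lt_one_of_one_lt_of_neg one_lt_two (by linarith)
    have hinvnn : (0:ℝ) ≤ (1-qs)⁻¹ := inv_nonneg.mpr (by linarith)
    have hanonneg : (0:ℝ) ≤ c7 * v * (2*v)^((1:ℝ)-α-β) := by
      have h1 : (0:ℝ) ≤ (2*v)^((1:ℝ)-α-β) := Real.rpow_nonneg h2v0.le _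
      positivity
    have hgeom : ∑' k:ℕ, ENNReal.ofReal ((c7 * v * (2*v)^((1:ℝ)-α-β)) * qs^k)
        ≤ ENNReal.ofReal ((c7 * v * (2*v)^((1:ℝ)-α-β)) * (1-qs)⁻¹) :=
      tsum_ofReal_geom_le hanonneg hqspos.le hqslt
    have hsumT : ∑' k, T k
        ≤ ENNReal.ofReal ((c7 * v * (2*v)^((1:ℝ)-α-β)) * (1-qs)⁻¹)
          + ENNReal.ofReal (KU2 * v^((2:ℝ)-α-β)) := by
      calc ∑' k, T k
          ≤ ∑' k:ℕ, (ENNReal.ofReal ((c7 * v * (2*v)^((1:ℝ)-α-β)) * qs^k)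
            + ENNReal.ofReal ((cf*C₁*2^(-α)*v^((2:ℝ)-α-β)) * qα^k)) := ENNReal.tsum_le_tsum hT_le
        _ = (∑' k:ℕ, ENNReal.ofReal ((c7 * v * (2*v)^((1:ℝ)-α-β)) * qs^k))
            + ∑' k:ℕ, ENNReal.ofReal ((cf*C₁*2^(-α)*v^((2:ℝ)-α-β)) * qα^k) := ENNReal.tsum_add
        _ ≤ _ := add_le_add hgeom hU2
    have hmid : c7 * v * (2*v)^((1:ℝ)-α-β) * (1-qs)⁻¹ = Kc3 * v^((2:ℝ)-α-β) := by
      have h2v' : ((2:ℝ)*v)^((1:ℝ)-α-β) = 2^((1:ℝ)-α-β) * v^((1:ℝ)-α-β) :=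
        Real.mul_rpow (by norm_num) hv.le
      have hv1 : v * v^((1:ℝ)-α-β) = v^((2:ℝ)-α-β) := by
        have h := Real.rpow_add hv 1 ((1:ℝ)-α-β)
        rw [Real.rpow_one] at h
        rw [show (2:ℝ)-α-β = 1 + ((1:ℝ)-α-β) by ring, h]
      rw [hKc3, h2v']
      calc c7 * v * (2^((1:ℝ)-α-β) * v^((1:ℝ)-α-β)) * (1-qs)⁻¹
          = c7 * 2^((1:ℝ)-α-β) * (1-qs)⁻¹ * (v * v^((1:ℝ)-α-β)) := by ring
        _ = c7 * 2^((1:ℝ)-α-β) * (1-qs)⁻¹ * v^((2:ℝ)-α-β) := by rw [hv1]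
        _ = _ := by ring
    have hKc3nn : (0:ℝ) ≤ Kc3 * v^((2:ℝ)-α-β) := by rw [← hmid]; positivity
    rw [hsplit]
    refine le_trans (add_le_add hlow (hup.trans hsumT)) ?_
    rw [hmid, ← ENNReal.ofReal_add hKc3nn (mul_nonneg hKU20.le hvb2),
        ← ENNReal.ofReal_add (mul_nonneg hKL0.le hvb2)
          (add_nonneg hKc3nn (mul_nonneg hKU20.le hvb2))]
    apply ENNReal.ofReal_le_ofReal
    have hKc3le : Kc3 ≤ max 0 Kc3 := le_max_right _ _
    rw [hC]
    linarith only [mul_le_mul_of_nonneg_right hKc3le hvb2,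
      mul_nonneg (le_max_left (0:ℝ) Kc1) hvb2, mul_nonneg (le_max_left (0:ℝ) Kc2) hvb2,
      hvb2, mul_nonneg hKL0.le hvb2, mul_nonneg hKU20.le hvb2]

end KeyBound

set_option maxHeartbeats 1000000 in
/-- Local (`v → 0`) behaviour of `H(v) = ∫₀^∞ (F(v+z)+F(v-z)-2F(v)) dμ(z)`,
uniform over truncated Lévy-type measures `μ` on `(0,A]` with tail bound
`μ([r,∞)) ≤ C₁ r^(-α)`, in the regular case `α + β < 2`:
`|H(v)| ≤ C|v|` if `α+β < 1`, `|H(v)| ≤ C|v| ln(1/|v|)` if `α+β = 1`, and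
`|H(v)| ≤ C|v|^(2-α-β)` if `1 < α+β < 2`; in particular `H(v) → 0` as `v → 0`,
uniformly over all such measures. -/
theorem H_local_bound
    (α β A C₁ : ℝ) (hα : α ∈ Set.Ioo (0:ℝ) 2) (hαβ : α + β < 2)
    (hA : 1 ≤ A) (hC₁ : 0 < C₁) :
    (∃ v₀ ∈ Set.Ioc (0:ℝ) 1, ∃ C : ℝ, 0 < C ∧
      ∀ μ : Measure ℝ, μ (Set.Ioc (0:ℝ) A)ᶜ = 0 →
        (∀ r : ℝ, 0 < r → μ (Set.Ici r) ≤ ENNReal.ofReal (C₁ * r ^ (-α))) →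
        ∀ v : ℝ, v ≠ 0 → |v| ≤ v₀ →
          Integrable (fun z => Fresp β (v + z) + Fresp β (v - z) - 2 * Fresp β v) μ ∧
          (α + β < 1 →
            |∫ z, (Fresp β (v + z) + Fresp β (v - z) - 2 * Fresp β v) ∂μ| ≤ C * |v|) ∧
          (α + β = 1 →
            |∫ z, (Fresp β (v + z) + Fresp β (v - z) - 2 * Fresp β v) ∂μ|
              ≤ C * (|v| * Real.log (1 / |v|))) ∧
          (1 < α + β →
            |∫ z, (Fresp β (v + z) + Fresp β (v - z) - 2 * Fresp β v) ∂μ|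
              ≤ C * |v| ^ (2 - α - β))) ∧
    (∀ δ : ℝ, 0 < δ → ∃ η : ℝ, 0 < η ∧
      ∀ μ : Measure ℝ, μ (Set.Ioc (0:ℝ) A)ᶜ = 0 →
        (∀ r : ℝ, 0 < r → μ (Set.Ici r) ≤ ENNReal.ofReal (C₁ * r ^ (-α))) →
        ∀ v : ℝ, v ≠ 0 → |v| ≤ η →
          |∫ z, (Fresp β (v + z) + Fresp β (v - z) - 2 * Fresp β v) ∂μ| ≤ δ) := by
  obtain ⟨hα0, hα2⟩ := hα
  have hβ2 : β < 2 := by linarith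
  obtain ⟨C, hC0, hkey⟩ := key_bound α β A C₁ hα0 hα2 hαβ hA hC₁
  have hmeas : ∀ w : ℝ, Measurable (fun z => Fresp β (w + z) + Fresp β (w - z) - 2 * Fresp β w) :=
    fun w => (((measurable_Fresp β).comp (measurable_const.add measurable_id)).add
      ((measurable_Fresp β).comp (measurable_const.sub measurable_id))).sub measurable_const
  have hnegfun : ∀ w z : ℝ, Fresp β (-w + z) + Fresp β (-w - z) - 2 * Fresp β (-w)
      = -(Fresp β (w + z) + Fresp β (w - z) - 2 * Fresp β w) := by
    intro w z
    rw [show -w + z = -(w - z) by ring, show -w - z = -(w + z) by ring,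
      Fresp_neg, Fresp_neg, Fresp_neg]
    ring
  -- main statement for arbitrary nonzero v with |v| ≤ 1/4
  have hmain : ∀ μ : Measure ℝ, μ (Set.Ioc (0:ℝ) A)ᶜ = 0 →
      (∀ r : ℝ, 0 < r → μ (Set.Ici r) ≤ ENNReal.ofReal (C₁ * r ^ (-α))) →
      ∀ v : ℝ, v ≠ 0 → |v| ≤ 1/4 →
        Integrable (fun z => Fresp β (v + z) + Fresp β (v - z) - 2 * Fresp β v) μ ∧
        (α + β < 1 →
          |∫ z, (Fresp β (v + z) + Fresp β (v - z) - 2 * Fresp β v) ∂μ| ≤ C * |v|) ∧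
        (α + β = 1 →
          |∫ z, (Fresp β (v + z) + Fresp β (v - z) - 2 * Fresp β v) ∂μ|
            ≤ C * (|v| * Real.log (1 / |v|))) ∧
        (1 < α + β →
          |∫ z, (Fresp β (v + z) + Fresp β (v - z) - 2 * Fresp β v) ∂μ|
            ≤ C * |v| ^ (2 - α - β)) := by
    intro μ hconc htail v hv0 hv4
    -- positive case first
    have hposcase : ∀ w : ℝ, 0 < w → w ≤ 1/4 →
        Integrable (fun z => Fresp β (w + z) + Fresp β (w - z) - 2 * Fresp β w) μ ∧
        (α + β < 1 →
          |∫ z, (Fresp β (w + z) + Fresp β (w - z) - 2 * Fresp β w) ∂μ| ≤ C * w) ∧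
        (α + β = 1 →
          |∫ z, (Fresp β (w + z) + Fresp β (w - z) - 2 * Fresp β w) ∂μ|
            ≤ C * (w * Real.log (1 / w))) ∧
        (1 < α + β →
          |∫ z, (Fresp β (w + z) + Fresp β (w - z) - 2 * Fresp β w) ∂μ|
            ≤ C * w ^ (2 - α - β)) := by
      intro w hw hw4
      obtain ⟨h1, h2, h3⟩ := hkey μ hconc htail w hw hw4
      have hfin : ∫⁻ z, ‖Fresp β (w + z) + Fresp β (w - z) - 2 * Fresp β w‖₊ ∂μ < ⊤ := by
        rcases lt_trichotomy (α+β) 1 with hc | hc | hc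
        · exact lt_of_le_of_lt (h1 hc) ENNReal.ofReal_lt_top
        · exact lt_of_le_of_lt (h2 hc) ENNReal.ofReal_lt_top
        · exact lt_of_le_of_lt (h3 hc) ENNReal.ofReal_lt_top
      have hint : Integrable (fun z => Fresp β (w + z) + Fresp β (w - z) - 2 * Fresp β w) μ :=
        ⟨(hmeas w).aestronglyMeasurable, hfin⟩
      have habs : |∫ z, (Fresp β (w + z) + Fresp β (w - z) - 2 * Fresp β w) ∂μ|
          ≤ (∫⁻ z, ‖Fresp β (w + z) + Fresp β (w - z) - 2 * Fresp β w‖₊ ∂μ).toReal := by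
        rw [← Real.norm_eq_abs]
        refine (norm_integral_le_lintegral_norm _).trans (le_of_eq ?_)
        congr 1
        exact lintegral_congr (fun z => ofReal_norm_eq_enorm _)
      have hlog : (0:ℝ) ≤ Real.log (1/w) := by
        apply Real.log_nonneg
        rw [le_div_iff₀ hw]
        linarith
      refine ⟨hint, fun hc => ?_, fun hc => ?_, fun hc => ?_⟩
      · exact habs.trans (ENNReal.toReal_le_of_le_ofReal (by positivity) (h1 hc))
      · exact habs.trans (ENNReal.toReal_le_of_le_ofReal (by positivity) (h2 hc))
      · exact habs.trans (ENNReal.toReal_le_of_le_ofReal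
          (mul_nonneg hC0.le (Real.rpow_nonneg hw.le _)) (h3 hc))
    rcases lt_or_ge 0 v with hvpos | hvle
    · have hveq : |v| = v := abs_of_pos hvpos
      rw [hveq]
      rw [hveq] at hv4
      exact hposcase v hvpos hv4
    · have hvneg : v < 0 := lt_of_le_of_ne hvle hv0
      have hveq : |v| = -v := abs_of_neg hvneg
      rw [hveq] at hv4 ⊢
      have hfe : (fun z => Fresp β (v + z) + Fresp β (v - z) - 2 * Fresp β v)
          = fun z => -(Fresp β (-v + z) + Fresp β (-v - z) - 2 * Fresp β (-v)) := by
        funext z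
        have h := hnegfun (-v) z
        rw [neg_neg] at h
        exact h
      obtain ⟨hint, hb1, hb2, hb3⟩ := hposcase (-v) (by linarith) hv4
      rw [hfe]
      refine ⟨hint.neg, ?_, ?_, ?_⟩ <;>
        · intro hc
          rw [integral_neg, abs_neg]
          first
            | exact hb1 hc
            | exact hb2 hc
            | exact hb3 hc
  constructor
  · exact ⟨1/4, ⟨by norm_num, by norm_num⟩, C, hC0, hmain⟩
  · -- uniform smallness
    set γ : ℝ := (min 1 (2-α-β))/2 with hγdef
    have hb2pos : (0:ℝ) < 2-α-β := by linarith
    have hγ0 : 0 < γ := by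
      rw [hγdef]
      have : (0:ℝ) < min 1 (2-α-β) := lt_min one_pos hb2pos
      linarith
    have hγ1 : γ ≤ 1 := by
      rw [hγdef]
      have : min 1 (2-α-β) ≤ 1 := min_le_left _ _
      linarith
    intro δ hδ
    have hx0 : 0 < δ/(2*C) := div_pos hδ (by linarith)
    refine ⟨min (1/4) ((δ/(2*C))^(γ⁻¹)), lt_min (by norm_num) (Real.rpow_pos_of_pos hx0 _), ?_⟩
    intro μ hconc htail v hv0 hvη
    have hv4 : |v| ≤ 1/4 := le_trans hvη (min_le_left _ _)
    have hw : 0 < |v| := abs_pos.mpr hv0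
    have hw1 : |v| ≤ 1 := by linarith
    obtain ⟨hint, hb1, hb2, hb3⟩ := hmain μ hconc htail v hv0 hv4
    have hclaim : |∫ z, (Fresp β (v + z) + Fresp β (v - z) - 2 * Fresp β v) ∂μ|
        ≤ 2*C*|v|^γ := by
      have hvγnn : (0:ℝ) ≤ |v|^γ := Real.rpow_nonneg hw.le _
      rcases lt_trichotomy (α+β) 1 with hc | hc | hc
      · refine (hb1 hc).trans ?_
        have h := Real.rpow_le_rpow_of_exponent_ge hw hw1 hγ1
        rw [Real.rpow_one] at h
        nlinarith [mul_le_mul_of_nonneg_left h hC0.le]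
      · refine (hb2 hc).trans ?_
        have hγhalf : γ = 1/2 := by
          rw [hγdef, show (2:ℝ)-α-β = 1 by linarith, min_self]
        have hltd : Real.log (|v|^(-(1/2):ℝ)) ≤ |v|^(-(1/2):ℝ) - 1 :=
          Real.log_le_sub_one_of_pos (Real.rpow_pos_of_pos hw _)
        rw [Real.log_rpow hw] at hltd
        have hlog1v : Real.log (1/|v|) = -Real.log |v| := by rw [one_div, Real.log_inv]
        have hsplit : |v| * |v|^(-(1/2):ℝ) = |v|^((1/2):ℝ) := by
          have h := Real.rpow_add hw 1 (-(1/2))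
          rw [Real.rpow_one] at h
          rw [← h]
          norm_num
        have hmono : |v| * Real.log (1/|v|) ≤ 2 * |v|^((1/2):ℝ) := by
          rw [hlog1v]
          have hstep : -Real.log |v| ≤ 2 * |v|^(-(1/2):ℝ) := by linarith
          calc |v| * -Real.log |v| ≤ |v| * (2 * |v|^(-(1/2):ℝ)) :=
                mul_le_mul_of_nonneg_left hstep hw.le
            _ = 2 * (|v| * |v|^(-(1/2):ℝ)) := by ring
            _ = 2 * |v|^((1/2):ℝ) := by rw [hsplit]
        rw [hγhalf]
        calc C * (|v| * Real.log (1/|v|)) ≤ C * (2 * |v|^((1/2):ℝ)) :=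
              mul_le_mul_of_nonneg_left hmono hC0.le
          _ = 2*C*|v|^((1/2):ℝ) := by ring
      · refine (hb3 hc).trans ?_
        have hγle : γ ≤ 2-α-β := by
          rw [hγdef]
          have h1 : min 1 (2-α-β) ≤ 2-α-β := min_le_right _ _
          linarith
        have h := Real.rpow_le_rpow_of_exponent_ge hw hw1 hγle
        nlinarith [mul_le_mul_of_nonneg_left h hC0.le]
    refine hclaim.trans ?_
    have hvle2 : |v| ≤ (δ/(2*C))^(γ⁻¹) := le_trans hvη (min_le_right _ _)
    have h2 : |v|^γ ≤ ((δ/(2*C))^(γ⁻¹))^γ := Real.rpow_le_rpow hw.le hvle2 hγ0.le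
    have h3 : ((δ/(2*C))^(γ⁻¹):ℝ)^γ = δ/(2*C) := by
      rw [← Real.rpow_mul hx0.le, inv_mul_cancel₀ hγ0.ne', Real.rpow_one]
    rw [h3] at h2
    calc 2*C*|v|^γ ≤ 2*C*(δ/(2*C)) := by
          refine mul_le_mul_of_nonneg_left h2 (by linarith)
      _ = δ := by field_simp
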